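/- arXiv:1108.5128 — 3 statements merged into one kernel-verified Lean document; each statement's English description precedes it below -/
import Mathlib

section
/- Let t₀ ∈ ℝ, let W : ℝ → ℝ be differentiable on [t₀, ∞), and let c ∈ ℝ. Suppose W(t₀) ≤ c and that W'(t) ≤ 0 for every t ≥ t₀ at which W(t) ≥ c. Then W(t) ≤ c for all t ≥ t₀. -/
/-- invariance of the sublevel set `{W ≤ c}`: if `W(t₀) ≤ c` and `W' ≤ 0`
whenever `W ≥ c`, then `W(t) ≤ c` for all `t ≥ t₀`. -/
theorem stmt10 (t₀ : ℝ) (W W' : ℝ → ℝ) (c : ℝ)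
    (hdiff : ∀ t ≥ t₀, HasDerivWithinAt W (W' t) (Set.Ici t₀) t)
    (h0 : W t₀ ≤ c)
    (hdec : ∀ t ≥ t₀, c ≤ W t → W' t ≤ 0) :
    ∀ t ≥ t₀, W t ≤ c := by
  intro t ht
  have key : ∀ ε > 0, W t ≤ c + ε * (t - t₀) := by
    intro ε hε
    have hcont : ContinuousOn W (Set.Icc t₀ t) := fun x hx =>
      ((hdiff x hx.1).continuousWithinAt).mono (fun y hy => hy.1)
    have hW' : ∀ x ∈ Set.Ico t₀ t, HasDerivWithinAt W (W' x) (Set.Ici x) x := fun x hx =>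
      (hdiff x hx.1).mono (Set.Ici_subset_Ici.2 hx.1)
    have hB : ∀ x : ℝ, HasDerivAt (fun x => c + ε * (x - t₀)) ε x := by
      intro x
      simpa using (((hasDerivAt_id x).sub_const t₀).const_mul ε).const_add c
    have bound : ∀ x ∈ Set.Ico t₀ t, W x = c + ε * (x - t₀) → W' x < ε := by
      intro x hx hWx
      refine lt_of_le_of_lt (hdec x hx.1 ?_) hε
      rw [hWx]
      nlinarith [hx.1]
    exact image_le_of_deriv_right_lt_deriv_boundary hcont hW'
      (by simpa using h0) hB bound ⟨ht, le_rfl⟩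
  by_contra h
  push_neg at h
  obtain ⟨ε, hε, hεlt⟩ : ∃ ε > 0, c + ε * (t - t₀) < W t := by
    rcases eq_or_lt_of_le ht with rfl | hlt
    · exact ⟨1, one_pos, by simpa using h⟩
    · refine ⟨(W t - c) / (2 * (t - t₀)), div_pos (by linarith) (by linarith), ?_⟩
      have hne : t - t₀ ≠ 0 := by linarith
      have heq : (W t - c) / (2 * (t - t₀)) * (t - t₀) = (W t - c) / 2 := by
        field_simp
      rw [heq]
      linarith
  exact absurd (key ε hε) (not_le.2 hεlt)
end

section
/- Let α₁, α₂ : [0,∞) → [0,∞) be class 𝒦 functions with α₂ a bijection of [0,∞) and α₁(s) ≤ α₂(s) for all s ≥ 0. Let V : ℝⁿ → ℝ, t₀ ∈ ℝ, δ > 0, and let x : [t₀, ∞) → ℝⁿ be continuous such that W(t) := V(x(t)) is differentiable on [t₀, ∞) and α₁(‖x(t)‖) ≤ V(x(t)) ≤ α₂(‖x(t)‖) for all t ≥ t₀. Suppose ‖x(t₀)‖ ≤ α₂⁻¹(α₁(δ)) and W'(t) ≤ 0 for every t ≥ t₀ at which ‖x(t)‖ ≥ α₂⁻¹(α₁(δ)).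 Then ‖x(t)‖ ≤ δ for all t ≥ t₀. -/
/-- A function `α : [0,∞) → [0,∞)` is of class 𝒦 if it is continuous, strictly increasing,
and vanishes at 0. -/
def IsClassK (α : ℝ → ℝ) : Prop :=
  ContinuousOn α (Set.Ici 0) ∧ StrictMonoOn α (Set.Ici 0) ∧ α 0 = 0

/-- ultimate boundedness: a Lyapunov function sandwiched by class 𝒦 bounds
and decreasing outside the ball of radius `α₂⁻¹(α₁(δ))` keeps the state inside `B_δ`. -/
theorem stmt11 {n : ℕ} (α₁ α₂ inv₂ : ℝ → ℝ)
    (h₁K : IsClassK α₁) (h₂K : IsClassK α₂)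
    (h₂bij : Set.BijOn α₂ (Set.Ici 0) (Set.Ici 0))
    (hinv₂ : Set.InvOn inv₂ α₂ (Set.Ici 0) (Set.Ici 0))
    (h₁₂ : ∀ s ≥ (0:ℝ), α₁ s ≤ α₂ s)
    (V : EuclideanSpace ℝ (Fin n) → ℝ) (t₀ : ℝ) (δ : ℝ) (hδ : 0 < δ)
    (x : ℝ → EuclideanSpace ℝ (Fin n)) (W' : ℝ → ℝ)
    (hx : ContinuousOn x (Set.Ici t₀))
    (hW : ∀ t ≥ t₀, HasDerivWithinAt (fun s => V (x s)) (W' t) (Set.Ici t₀) t)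
    (hsandwich : ∀ t ≥ t₀, α₁ ‖x t‖ ≤ V (x t) ∧ V (x t) ≤ α₂ ‖x t‖)
    (h0 : ‖x t₀‖ ≤ inv₂ (α₁ δ))
    (hdec : ∀ t ≥ t₀, inv₂ (α₁ δ) ≤ ‖x t‖ → W' t ≤ 0) :
    ∀ t ≥ t₀, ‖x t‖ ≤ δ := by
  set c : ℝ := α₁ δ with hc
  set η : ℝ := inv₂ c with hη
  have hcpos : 0 < c := by
    have := h₁K.2.1 (Set.self_mem_Ici) (le_of_lt hδ : (0:ℝ) ≤ δ) hδ
    rwa [h₁K.2.2] at this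
  have hc0 : c ∈ Set.Ici (0:ℝ) := le_of_lt hcpos
  have hη0 : (0:ℝ) ≤ η := by
    obtain ⟨a, ha, haeq⟩ := h₂bij.surjOn hc0
    have : inv₂ c = a := by rw [← haeq]; exact hinv₂.1 ha
    rw [hη, this]; exact ha
  have hα₂η : α₂ η = c := hinv₂.2 hc0
  set W : ℝ → ℝ := fun s => V (x s) with hWdef
  have hWcont : ContinuousOn W (Set.Ici t₀) := fun t ht =>
    (hW t ht).continuousWithinAt
  -- key: W t ≥ c implies ‖x t‖ ≥ η
  have hkey : ∀ t ≥ t₀, c ≤ W t → η ≤ ‖x t‖ := by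
    intro t ht hWt
    by_contra hlt
    push_neg at hlt
    have := h₂K.2.1 (norm_nonneg _ : ‖x t‖ ∈ Set.Ici (0:ℝ)) hη0 hlt
    rw [hα₂η] at this
    exact absurd ((hsandwich t ht).2.trans_lt this) (not_lt.mpr hWt)
  -- W t₀ ≤ c
  have hW0 : W t₀ ≤ c := by
    have h1 : α₂ ‖x t₀‖ ≤ α₂ η :=
      h₂K.2.1.monotoneOn (norm_nonneg _) hη0 h0
    rw [hα₂η] at h1
    exact (hsandwich t₀ le_rfl).2.trans h1
  -- main claim: W t ≤ c for all t ≥ t₀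
  have hmain : ∀ t ≥ t₀, W t ≤ c := by
    intro t₁ ht₁
    by_contra hgt
    push_neg at hgt
    set S : Set ℝ := Set.Icc t₀ t₁ ∩ W ⁻¹' (Set.Iic c) with hS
    have hScl : IsClosed S :=
      (hWcont.mono Set.Icc_subset_Ici_self).preimage_isClosed_of_isClosed
        isClosed_Icc isClosed_Iic
    have hne : S.Nonempty := ⟨t₀, ⟨le_rfl, ht₁⟩, hW0⟩
    have hbdd : BddAbove S := ⟨t₁, fun u hu => hu.1.2⟩
    set s := sSup S with hs
    have hsS : s ∈ S := hScl.csSup_mem hne hbdd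
    have hst₁ : s < t₁ := lt_of_le_of_ne hsS.1.2
      (fun h => absurd (h ▸ hsS.2) (not_le.mpr hgt))
    have hst₀ : t₀ ≤ s := hsS.1.1
    have hIoc : ∀ u ∈ Set.Ioc s t₁, c < W u := by
      intro u hu
      by_contra hle
      push_neg at hle
      have : u ∈ S := ⟨⟨hst₀.trans hu.1.le, hu.2⟩, hle⟩
      exact absurd (le_csSup hbdd this) (not_le.mpr hu.1)
    have hanti : AntitoneOn W (Set.Icc s t₁) := by
      apply antitoneOn_of_deriv_nonpos (convex_Icc s t₁)
      · exact hWcont.mono (fun u hu => hst₀.trans hu.1)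
      · rw [interior_Icc]
        intro u hu
        exact (((hW u (hst₀.trans hu.1.le)).hasDerivAt
          (Ici_mem_nhds (lt_of_le_of_lt hst₀ hu.1))).differentiableAt).differentiableWithinAt
      · rw [interior_Icc]
        intro u hu
        have hut₀ : t₀ ≤ u := hst₀.trans hu.1.le
        have hderiv : deriv W u = W' u :=
          ((hW u hut₀).hasDerivAt (Ici_mem_nhds (lt_of_le_of_lt hst₀ hu.1))).deriv
        rw [hderiv]
        exact hdec u hut₀ (hkey u hut₀ (hIoc u ⟨hu.1, hu.2.le⟩).le)
    have := hanti ⟨le_rfl, hst₁.le⟩ ⟨hst₁.le, le_rfl⟩ hst₁.le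
    exact absurd (this.trans hsS.2) (not_le.mpr hgt)
  intro t ht
  by_contra hgt
  push_neg at hgt
  have h1 := h₁K.2.1 (le_of_lt hδ : δ ∈ Set.Ici (0:ℝ)) ((le_of_lt hδ).trans hgt.le : ‖x t‖ ∈ Set.Ici (0:ℝ)) hgt
  exact absurd ((hsandwich t ht).1.trans (hmain t ht)) (not_le.mpr h1)
end

section
/- Let D ⊆ ℝⁿ, f₀ : ℝⁿ × ℝᵖ → ℝⁿ, κ : ℝⁿ → ℝᵖ, and let V : ℝⁿ → ℝ be C¹. Let α₃, α₄ be class 𝒦 functions with α₃ a bijection of [0,∞), α₃⁻¹ Lipschitz with constant L₁ > 0 and α₄ Lipschitz with constant L₂ > 0, and suppose for all y ∈ D: ∇V(y)·f₀(y, κ(y)) ≤ −α₃(‖y‖) and ‖∇V(y)‖ ≤ α₄(‖y‖). Let ϑ ∈ (0,1), t_k ∈ ℝ, τ > 0, x_k ∈ D, and let x : [t_k, t_k + τ] → D be differentiable with x(t_k) = x_k and ẋ(t) = f₀(x(t), κ(x_k)) for all t ∈ [t_k, t_k + τ]. Suppose there are M₁, M₂ ≥ 0 such that ‖f₀(x(t),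 κ(x_k)) − f₀(x(t), κ(x(t)))‖ ≤ M₁(t − t_k) + M₂(t − t_k)² for all t ∈ [t_k, t_k + τ], and that M₁τ + M₂τ² ≤ ϑ/(L₁L₂). Then for all t ∈ [t_k, t_k + τ]: (d/dt) V(x(t)) ≤ −(1 − ϑ)·α₃(‖x(t)‖). -/
open Set

open scoped RealInnerProductSpace

theorem IsClassK.nonneg {α : ℝ → ℝ} (hα : IsClassK α) {r : ℝ} (hr : 0 ≤ r) : 0 ≤ α r :=
  hα.2.2 ▸ hα.2.1.monotoneOn self_mem_Ici hr hr

theorem le_mul_of_lipschitz_Ici_of_map_zero {f : ℝ → ℝ} {L : ℝ} (hf0 : f 0 = 0)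
    (hf : ∀ s ∈ Ici (0 : ℝ), ∀ t ∈ Ici (0 : ℝ), |f s - f t| ≤ L * |s - t|)
    {r : ℝ} (hr : 0 ≤ r) : f r ≤ L * r := by
  have h := hf r hr 0 self_mem_Ici
  rw [hf0, sub_zero, sub_zero, abs_of_nonneg hr] at h
  exact (le_abs_self _).trans h

theorem IsClassK.le_mul_of_lipschitz_inv {α inv : ℝ → ℝ} {L : ℝ} (hα : IsClassK α)
    (hinv : LeftInvOn inv α (Ici 0))
    (hLip : ∀ s ∈ Ici (0 : ℝ), ∀ t ∈ Ici (0 : ℝ), |inv s - inv t| ≤ L * |s - t|)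
    {r : ℝ} (hr : 0 ≤ r) : r ≤ L * α r := by
  have hinv0 : inv 0 = 0 := by simpa [hα.2.2] using hinv (le_refl (0 : ℝ))
  simpa [hinv hr] using le_mul_of_lipschitz_Ici_of_map_zero hinv0 hLip (hα.nonneg hr)

theorem HasDerivWithinAt.eq_inner_gradient_of_comp {F : Type*} [NormedAddCommGroup F]
    [InnerProductSpace ℝ F] [CompleteSpace F] {V : F → ℝ} {x : ℝ → F} {v : F} {s : Set ℝ}
    {t w : ℝ} (hw : HasDerivWithinAt (fun τ => V (x τ)) w s t) (hV : DifferentiableAt ℝ V (x t))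
    (hx : HasDerivWithinAt x v s t) (hs : UniqueDiffWithinAt ℝ s t) :
    w = ⟪gradient V (x t), v⟫ :=
  hs.eq_deriv s hw (hV.hasGradientAt.hasFDerivAt.comp_hasDerivWithinAt t hx)

theorem inner_le_neg_one_sub_mul_of_norm_sub_le {F : Type*} [NormedAddCommGroup F]
    [InnerProductSpace ℝ F] {g u u' : F} {a b L ϑ : ℝ} (hL : L ≠ 0) (hu : ⟪g, u⟫ ≤ -a)
    (hg : ‖g‖ ≤ b) (hb : b ≤ L * a) (hd : ‖u' - u‖ ≤ ϑ / L) :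
    ⟪g, u'⟫ ≤ -(1 - ϑ) * a := by
  have herr : ‖g‖ * ‖u' - u‖ ≤ (L * a) * (ϑ / L) :=
    mul_le_mul (hg.trans hb) hd (norm_nonneg _) ((norm_nonneg _).trans (hg.trans hb))
  calc ⟪g, u'⟫ = ⟪g, u⟫ + ⟪g, u' - u⟫ := by rw [inner_sub_right]; ring
    _ ≤ -a + ‖g‖ * ‖u' - u‖ := add_le_add hu (real_inner_le_norm _ _)
    _ ≤ -a + (L * a) * (ϑ / L) := by gcongr
    _ = -(1 - ϑ) * a := by field_simp; ring

theorem stmt14_general {n p : ℕ} (D : Set (EuclideanSpace ℝ (Fin n)))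
    (f₀ : EuclideanSpace ℝ (Fin n) → EuclideanSpace ℝ (Fin p) → EuclideanSpace ℝ (Fin n))
    (κ : EuclideanSpace ℝ (Fin n) → EuclideanSpace ℝ (Fin p))
    (V : EuclideanSpace ℝ (Fin n) → ℝ) (hV : ContDiff ℝ 1 V)
    (α₃ α₄ inv₃ : ℝ → ℝ)
    (h₃K : IsClassK α₃) (h₄K : IsClassK α₄)
    (hinv₃ : Set.InvOn inv₃ α₃ (Set.Ici 0) (Set.Ici 0))
    (L₁ L₂ : ℝ) (hL₁ : 0 < L₁) (hL₂ : 0 < L₂)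
    (hinv₃Lip : ∀ s ∈ Set.Ici (0:ℝ), ∀ t ∈ Set.Ici (0:ℝ), |inv₃ s - inv₃ t| ≤ L₁ * |s - t|)
    (hα₄Lip : ∀ s ∈ Set.Ici (0:ℝ), ∀ t ∈ Set.Ici (0:ℝ), |α₄ s - α₄ t| ≤ L₂ * |s - t|)
    (hLya : ∀ y ∈ D, (inner ℝ (gradient V y) (f₀ y (κ y)) : ℝ) ≤ -α₃ ‖y‖ ∧
      ‖gradient V y‖ ≤ α₄ ‖y‖)
    (ϑ : ℝ)
    (tk τ : ℝ) (hτ : 0 < τ)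
    (xk : EuclideanSpace ℝ (Fin n))
    (x : ℝ → EuclideanSpace ℝ (Fin n))
    (hxD : ∀ t ∈ Set.Icc tk (tk + τ), x t ∈ D)
    (hdyn : ∀ t ∈ Set.Icc tk (tk + τ),
      HasDerivWithinAt x (f₀ (x t) (κ xk)) (Set.Icc tk (tk + τ)) t)
    (M₁ M₂ : ℝ) (hM₁ : 0 ≤ M₁) (hM₂ : 0 ≤ M₂)
    (hdh : ∀ t ∈ Set.Icc tk (tk + τ),
      ‖f₀ (x t) (κ xk) - f₀ (x t) (κ (x t))‖ ≤ M₁ * (t - tk) + M₂ * (t - tk) ^ 2)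
    (hτcond : M₁ * τ + M₂ * τ ^ 2 ≤ ϑ / (L₁ * L₂)) :
    ∀ t ∈ Set.Icc tk (tk + τ), ∀ w : ℝ,
      HasDerivWithinAt (fun s => V (x s)) w (Set.Icc tk (tk + τ)) t →
      w ≤ -(1 - ϑ) * α₃ ‖x t‖ := by
  intro t ht w hw
  rw [hw.eq_inner_gradient_of_comp (hV.differentiable one_ne_zero _) (hdyn t ht)
    (uniqueDiffOn_Icc (by linarith) t ht)]
  obtain ⟨hdecr, hgrad⟩ := hLya (x t) (hxD t ht)
  have hr : 0 ≤ ‖x t‖ := norm_nonneg _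
  have hα₄ : α₄ ‖x t‖ ≤ L₁ * L₂ * α₃ ‖x t‖ :=
    calc α₄ ‖x t‖ ≤ L₂ * ‖x t‖ := le_mul_of_lipschitz_Ici_of_map_zero h₄K.2.2 hα₄Lip hr
      _ ≤ L₂ * (L₁ * α₃ ‖x t‖) := by
        gcongr; exact h₃K.le_mul_of_lipschitz_inv hinv₃.1 hinv₃Lip hr
      _ = L₁ * L₂ * α₃ ‖x t‖ := by ring
  have hpert : ‖f₀ (x t) (κ xk) - f₀ (x t) (κ (x t))‖ ≤ ϑ / (L₁ * L₂) := by
    have h0 : 0 ≤ t - tk := by linarith [ht.1]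
    have hle : t - tk ≤ τ := by linarith [ht.2]
    exact (hdh t ht).trans (le_trans (by gcongr) hτcond)
  exact inner_le_neg_one_sub_mul_of_norm_sub_le (by positivity) hdecr hgrad hα₄ hpert

/-- per-sampling-interval decrease: under the zero-order-hold input `κ(x_k)`,
if the holding perturbation obeys `‖d_h(t)‖ ≤ M₁(t−t_k) + M₂(t−t_k)²` and the inter-sampling
time satisfies `M₁τ + M₂τ² ≤ ϑ/(L₁L₂)`, then `(d/dt)V(x(t)) ≤ −(1−ϑ)α₃(‖x(t)‖)`. -/
theorem stmt14 {n p : ℕ} (D : Set (EuclideanSpace ℝ (Fin n)))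
    (f₀ : EuclideanSpace ℝ (Fin n) → EuclideanSpace ℝ (Fin p) → EuclideanSpace ℝ (Fin n))
    (κ : EuclideanSpace ℝ (Fin n) → EuclideanSpace ℝ (Fin p))
    (V : EuclideanSpace ℝ (Fin n) → ℝ) (hV : ContDiff ℝ 1 V)
    (α₃ α₄ inv₃ : ℝ → ℝ)
    (h₃K : IsClassK α₃) (h₄K : IsClassK α₄)
    (h₃bij : Set.BijOn α₃ (Set.Ici 0) (Set.Ici 0))
    (hinv₃ : Set.InvOn inv₃ α₃ (Set.Ici 0) (Set.Ici 0))
    (L₁ L₂ : ℝ) (hL₁ : 0 < L₁) (hL₂ : 0 < L₂)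
    (hinv₃Lip : ∀ s ∈ Set.Ici (0:ℝ), ∀ t ∈ Set.Ici (0:ℝ), |inv₃ s - inv₃ t| ≤ L₁ * |s - t|)
    (hα₄Lip : ∀ s ∈ Set.Ici (0:ℝ), ∀ t ∈ Set.Ici (0:ℝ), |α₄ s - α₄ t| ≤ L₂ * |s - t|)
    (hLya : ∀ y ∈ D, (inner ℝ (gradient V y) (f₀ y (κ y)) : ℝ) ≤ -α₃ ‖y‖ ∧
      ‖gradient V y‖ ≤ α₄ ‖y‖)
    (ϑ : ℝ) (hϑ : 0 < ϑ) (hϑ1 : ϑ < 1)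
    (tk τ : ℝ) (hτ : 0 < τ)
    (xk : EuclideanSpace ℝ (Fin n)) (hxk : xk ∈ D)
    (x : ℝ → EuclideanSpace ℝ (Fin n))
    (hxD : ∀ t ∈ Set.Icc tk (tk + τ), x t ∈ D)
    (hx0 : x tk = xk)
    (hdyn : ∀ t ∈ Set.Icc tk (tk + τ),
      HasDerivWithinAt x (f₀ (x t) (κ xk)) (Set.Icc tk (tk + τ)) t)
    (M₁ M₂ : ℝ) (hM₁ : 0 ≤ M₁) (hM₂ : 0 ≤ M₂)
    (hdh : ∀ t ∈ Set.Icc tk (tk + τ),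
      ‖f₀ (x t) (κ xk) - f₀ (x t) (κ (x t))‖ ≤ M₁ * (t - tk) + M₂ * (t - tk) ^ 2)
    (hτcond : M₁ * τ + M₂ * τ ^ 2 ≤ ϑ / (L₁ * L₂)) :
    ∀ t ∈ Set.Icc tk (tk + τ), ∀ w : ℝ,
      HasDerivWithinAt (fun s => V (x s)) w (Set.Icc tk (tk + τ)) t →
      w ≤ -(1 - ϑ) * α₃ ‖x t‖ :=
  stmt14_general D f₀ κ V hV α₃ α₄ inv₃ h₃K h₄K hinv₃ L₁ L₂ hL₁ hL₂ hinv₃Lip hα₄Lip hLya ϑ tk τ hτ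
    xk x hxD hdyn M₁ M₂ hM₁ hM₂ hdh hτcond
end
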